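/- arXiv:2403.01473 — 8 statements merged into one kernel-verified Lean document; each statement's English description precedes it below -/
import Mathlib

section
/- Let S be a closed linear operator on a Hilbert space and λ a point of regular type for S (i.e., there exists c > 0 with ‖(S − λI)f‖ ≥ c‖f‖ for all f ∈ dom S). Then dom S² is a core of S if and only if dom(S) ∩ ran(S − λI) is dense in ran(S − λI). -/
/-! The map `ψ (x, y) = y - λ • x` sends the graph of `S` onto `ran (S - λ)`, and the graph of
`S` restricted to `dom S²` onto `dom S ∩ ran (S - λ)`, because `S f ∈ dom S` iff
`S f - λ • f ∈ dom S`. As `S - λ` is bounded below, `ψ` restricted to the graph of `S` is a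
homeomorphism onto its image. Hence density of the graph of `S` restricted to `dom S²` in the
(closed) graph of `S` is the same as density of `dom S ∩ ran (S - λ)` in `ran (S - λ)`. -/

open Topology

theorem closure_eq_iff_image_subset_closure_image {X Y : Type*} [TopologicalSpace X]
    [TopologicalSpace Y] {ψ : X → Y} {G D : Set X} (hG : IsClosed G)
    (hψ : IsInducing (G.domRestrict ψ)) (hD : D ⊆ G) :
    closure D = G ↔ ψ '' G ⊆ closure (ψ '' D) := by
  have mem_closure_iff_image : ∀ p (hp : p ∈ G), p ∈ closure D ↔ ψ p ∈ closure (ψ '' D) := by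
    intro p hp
    have hD' : D = Subtype.val '' (Subtype.val ⁻¹' D : Set G) := by
      rw [Subtype.image_preimage_coe, Set.inter_eq_right.mpr hD]
    rw [hD', ← closure_subtype (x := ⟨p, hp⟩), hψ.closure_eq_preimage_closure_image,
      Set.image_image]
    rfl
  rw [subset_antisymm_iff, and_iff_right (closure_minimal hD hG), Set.image_subset_iff]
  exact forall₂_congr mem_closure_iff_image

section

variable {𝕜 E : Type*} [NormedField 𝕜] [NormedAddCommGroup E] [NormedSpace 𝕜 E]

theorem LinearPMap.norm_le_of_mem_graph (S : E →ₗ.[𝕜] E) (lam : 𝕜) {c : ℝ} (hc : 0 < c)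
    (hbound : ∀ f : S.domain, c * ‖(f : E)‖ ≤ ‖S f - lam • (f : E)‖)
    {p : E × E} (hp : p ∈ S.graph) :
    ‖p‖ ≤ (1 + (1 + ‖lam‖) * c⁻¹) * ‖p.2 - lam • p.1‖ := by
  obtain ⟨f, rfl⟩ := S.mem_graph_iff'.mp hp
  set y := S f - lam • (f : E)
  have hf : ‖(f : E)‖ ≤ c⁻¹ * ‖y‖ := by
    rw [inv_mul_eq_div, le_div_iff₀ hc, mul_comm]
    exact hbound f
  have hSf : ‖S f‖ ≤ ‖y‖ + ‖lam‖ * ‖(f : E)‖ := by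
    calc ‖S f‖ = ‖y + lam • (f : E)‖ := by rw [sub_add_cancel]
      _ ≤ ‖y‖ + ‖lam‖ * ‖(f : E)‖ := (norm_add_le _ _).trans_eq (by rw [norm_smul])
  have hy := norm_nonneg y
  have hlam := norm_nonneg lam
  have hc' := inv_pos.mpr hc
  rw [Prod.norm_mk, max_le_iff]
  constructor <;> nlinarith [mul_le_mul_of_nonneg_left hf hlam, mul_nonneg hlam hc'.le]

theorem LinearPMap.isInducing_restrict_graph (S : E →ₗ.[𝕜] E) (lam : 𝕜) {c : ℝ} (hc : 0 < c)
    (hbound : ∀ f : S.domain, c * ‖(f : E)‖ ≤ ‖S f - lam • (f : E)‖) :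
    IsInducing ((S.graph : Set (E × E)).domRestrict fun p : E × E => p.2 - lam • p.1) := by
  set K : ℝ := 1 + (1 + ‖lam‖) * c⁻¹
  let ψ : S.graph →L[𝕜] E :=
    (ContinuousLinearMap.snd 𝕜 E E - lam • ContinuousLinearMap.fst 𝕜 E E).comp
      S.graph.subtypeL
  have hanti : AntilipschitzWith K.toNNReal ψ := ψ.antilipschitz_of_bound fun p => by
    rw [Real.coe_toNNReal _ (by positivity)]
    exact S.norm_le_of_mem_graph lam hc hbound p.2
  exact (hanti.isUniformInducing ψ.uniformContinuous).isInducing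

theorem LinearPMap.image_graph_eq_range (S : E →ₗ.[𝕜] E) (lam : 𝕜) :
    (fun p : E × E => p.2 - lam • p.1) '' S.graph =
      {y : E | ∃ f : S.domain, y = S f - lam • (f : E)} := by
  ext y
  constructor
  · rintro ⟨p, hp, rfl⟩
    obtain ⟨f, rfl⟩ := S.mem_graph_iff'.mp hp
    exact ⟨f, rfl⟩
  · rintro ⟨f, rfl⟩
    exact ⟨_, S.mem_graph f, rfl⟩

theorem LinearPMap.image_sq_domain_graph_eq (S : E →ₗ.[𝕜] E) (lam : 𝕜) :
    (fun p : E × E => p.2 - lam • p.1) ''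
        {p : E × E | ∃ f : S.domain, S f ∈ S.domain ∧ p = ((f : E), S f)} =
      (S.domain : Set E) ∩ {y : E | ∃ f : S.domain, y = S f - lam • (f : E)} := by
  ext y
  constructor
  · rintro ⟨_, ⟨f, hf, rfl⟩, rfl⟩
    exact ⟨S.domain.sub_mem hf (S.domain.smul_mem lam f.2), f, rfl⟩
  · rintro ⟨hy, f, rfl⟩
    have hSf : S f ∈ S.domain := by
      simpa using S.domain.add_mem hy (S.domain.smul_mem lam f.2)
    exact ⟨_, ⟨f, hSf, rfl⟩, rfl⟩

theorem LinearPMap.sq_domain_graph_subset_graph (S : E →ₗ.[𝕜] E) :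
    {p : E × E | ∃ f : S.domain, S f ∈ S.domain ∧ p = ((f : E), S f)} ⊆ S.graph := by
  rintro _ ⟨f, -, rfl⟩
  exact S.mem_graph f

end

theorem sq_domain_core_iff_dense_general
    {H : Type*} [NormedAddCommGroup H] [InnerProductSpace ℂ H]
    (S : H →ₗ.[ℂ] H) (hclosed : IsClosed (S.graph : Set (H × H))) (lam : ℂ)
    (hreg : ∃ c : ℝ, 0 < c ∧ ∀ f : S.domain, c * ‖(f : H)‖ ≤ ‖S f - lam • (f : H)‖) :
    (closure {p : H × H |
        ∃ f : S.domain, S f ∈ S.domain ∧ p = ((f : H), S f)} = (S.graph : Set (H × H))) ↔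
      closure ((S.domain : Set H) ∩ {y : H | ∃ f : S.domain, y = S f - lam • (f : H)}) =
        closure {y : H | ∃ f : S.domain, y = S f - lam • (f : H)} := by
  obtain ⟨c, hc, hbound⟩ := hreg
  rw [closure_eq_iff_image_subset_closure_image hclosed
      (S.isInducing_restrict_graph lam hc hbound) S.sq_domain_graph_subset_graph,
    S.image_graph_eq_range, S.image_sq_domain_graph_eq, subset_antisymm_iff,
    and_iff_right (closure_mono Set.inter_subset_right), isClosed_closure.closure_subset_iff]

/-- For a closed operator `S` and a point `λ` of regular type for `S`,
`dom S²` is a core of `S` iff `dom S ∩ ran (S - λ)` is dense in `ran (S - λ)`. -/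
theorem sq_domain_core_iff_dense
    {H : Type*} [NormedAddCommGroup H] [InnerProductSpace ℂ H] [CompleteSpace H]
    (S : H →ₗ.[ℂ] H) (hclosed : IsClosed (S.graph : Set (H × H))) (lam : ℂ)
    (hreg : ∃ c : ℝ, 0 < c ∧ ∀ f : S.domain, c * ‖(f : H)‖ ≤ ‖S f - lam • (f : H)‖) :
    (closure {p : H × H |
        ∃ f : S.domain, S f ∈ S.domain ∧ p = ((f : H), S f)} = (S.graph : Set (H × H))) ↔
      closure ((S.domain : Set H) ∩ {y : H | ∃ f : S.domain, y = S f - lam • (f : H)}) =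
        closure {y : H | ∃ f : S.domain, y = S f - lam • (f : H)} :=
  sq_domain_core_iff_dense_general S hclosed lam hreg
end

section
/- Let S be a closed operator on a Hilbert space, λ a point of regular type for S, and suppose the orthogonal complement of ran(S − λI) is finite-dimensional. Then dom(S) ∩ ran(S − λI) is dense in ran(S − λI), and hence dom S² is a core of S. -/
open scoped ComplexConjugate Pointwise Topology

set_option maxHeartbeats 1000000 in
/-- If `S` is closed, `λ` is a point of regular type of `S`, and the orthogonal complement of
`ran (S - λ)` is finite-dimensional, then `dom S ∩ ran (S - λ)` is dense in `ran (S - λ)`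
and `dom S²` is a core of `S`. -/
theorem sq_domain_core_of_finiteDimensional_complement
    {H : Type*} [NormedAddCommGroup H] [InnerProductSpace ℂ H] [CompleteSpace H]
    (S : H →ₗ.[ℂ] H) (hdense : Dense (S.domain : Set H))
    (hclosed : IsClosed (S.graph : Set (H × H))) (lam : ℂ)
    (hreg : ∃ c : ℝ, 0 < c ∧ ∀ f : S.domain, c * ‖(f : H)‖ ≤ ‖S f - lam • (f : H)‖)
    (hfin : FiniteDimensional ℂ
      ((LinearMap.range (S.toFun - lam • S.domain.subtype))ᗮ : Submodule ℂ H)) :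
    (closure ((S.domain : Set H) ∩ {y : H | ∃ f : S.domain, y = S f - lam • (f : H)}) =
        closure {y : H | ∃ f : S.domain, y = S f - lam • (f : H)}) ∧
      closure {p : H × H |
        ∃ f : S.domain, S f ∈ S.domain ∧ p = ((f : H), S f)} = (S.graph : Set (H × H)) := by
  obtain ⟨c, hc, hbd⟩ := hreg
  set T : S.domain →ₗ[ℂ] H := S.toFun - lam • S.domain.subtype with hT
  have hTapp : ∀ f : S.domain, T f = S f - lam • (f : H) := by
    intro f; simp [hT, LinearMap.sub_apply, LinearMap.smul_apply]
  have hbd' : ∀ f : S.domain, c * ‖(f : H)‖ ≤ ‖T f‖ := fun f => by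
    rw [hTapp]; exact hbd f
  set R : Submodule ℂ H := LinearMap.range T with hR
  have hRset : {y : H | ∃ f : S.domain, y = S f - lam • (f : H)} = (R : Set H) := by
    ext y
    simp only [Set.mem_setOf_eq, SetLike.mem_coe, hR, LinearMap.mem_range]
    constructor
    · rintro ⟨f, rfl⟩; exact ⟨f, (hTapp f).symm ▸ rfl⟩
    · rintro ⟨f, rfl⟩; exact ⟨f, (hTapp f).symm⟩
  -- R is closed
  have hRclosed : IsClosed (R : Set H) := by
    rw [← isSeqClosed_iff_isClosed]
    intro y yl hy hyl
    choose f hf using fun n => hy n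
    have hcau : CauchySeq (fun n => ((f n : H))) := by
      rw [Metric.cauchySeq_iff]
      intro ε hε
      obtain ⟨N, hN⟩ := (Metric.cauchySeq_iff.mp hyl.cauchySeq) (c * ε) (by positivity)
      refine ⟨N, fun m hm n hn => ?_⟩
      have key : c * ‖((f m : H)) - (f n : H)‖ ≤ dist (y m) (y n) := by
        have h1 := hbd' (f m - f n)
        rw [map_sub, hf, hf] at h1
        rw [dist_eq_norm]
        simpa using h1
      have h2 := hN m hm n hn
      rw [dist_eq_norm] at *
      nlinarith [norm_nonneg ((f m : H) - (f n : H))]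
    obtain ⟨fl, hfl⟩ := cauchySeq_tendsto_of_complete hcau
    have hSconv : Filter.Tendsto (fun n => S (f n)) Filter.atTop (𝓝 (yl + lam • fl)) := by
      have h3 : ∀ n, S (f n) = y n + lam • ((f n : H)) := by
        intro n; have h := hTapp (f n); rw [hf] at h; rw [h]; abel
      simp_rw [h3]
      exact hyl.add (hfl.const_smul lam)
    have hgraph : (fl, yl + lam • fl) ∈ S.graph := by
      have hmem : ∀ n, (((f n : H)), S (f n)) ∈ (S.graph : Set (H × H)) :=
        fun n => S.mem_graph (f n)
      exact hclosed.mem_of_tendsto (hfl.prodMk_nhds hSconv)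
        (Filter.Eventually.of_forall hmem)
    rw [LinearPMap.mem_graph_iff] at hgraph
    obtain ⟨g, hg1, hg2⟩ := hgraph
    refine ⟨g, ?_⟩
    rw [hTapp]
    simp only at hg1 hg2
    rw [hg1, hg2]
    abel
  -- the orthogonal complement and projection
  haveI : CompleteSpace (Rᗮ : Submodule ℂ H) := FiniteDimensional.complete ℂ _
  haveI : Submodule.HasOrthogonalProjection (Rᗮ : Submodule ℂ H) :=
    Submodule.HasOrthogonalProjection.ofCompleteSpace _
  set P : H →L[ℂ] (Rᗮ : Submodule ℂ H)  := Submodule.orthogonalProjectionOnto Rᗮ with hP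
  set P' : S.domain →ₗ[ℂ] (Rᗮ : Submodule ℂ H) :=
    (P : H →ₗ[ℂ] (Rᗮ : Submodule ℂ H)).comp S.domain.subtype with hP'
  have hP'app : ∀ f : S.domain, P' f = P (f : H) := fun f => rfl
  have hP'surj : LinearMap.range P' = ⊤ := by
    have hclosedrange : IsClosed ((LinearMap.range P' : Submodule ℂ (Rᗮ : Submodule ℂ H)) :
        Set (Rᗮ : Submodule ℂ H)) := Submodule.closed_of_finiteDimensional _
    rw [eq_top_iff]
    intro k _
    have hk : (k : H) ∈ closure (S.domain : Set H) := hdense _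
    have h1 : P (k : H) ∈ closure ((fun x => P x) '' (S.domain : Set H)) :=
      (image_closure_subset_closure_image P.continuous) ⟨(k : H), hk, rfl⟩
    have h2 : ((fun x => P x) '' (S.domain : Set H)) ⊆
        (LinearMap.range P' : Set (Rᗮ : Submodule ℂ H)) := by
      rintro _ ⟨x, hx, rfl⟩
      exact ⟨⟨x, hx⟩, rfl⟩
    have h3 : P (k : H) ∈ (LinearMap.range P' : Set (Rᗮ : Submodule ℂ H)) := by
      rw [← hclosedrange.closure_eq]
      exact closure_mono h2 h1
    have h4 : P (k : H) = k := by
      rw [hP]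
      exact Submodule.orthogonalProjectionOnto_mem_subspace_eq_self k
    rwa [h4] at h3
  obtain ⟨G, hG⟩ := P'.exists_rightInverse_of_surjective hP'surj
  have hGcont : Continuous G := G.continuous_of_finiteDimensional
  set Φ : H → H := fun x => x - ((G (P x) : S.domain) : H) with hΦ
  have hΦcont : Continuous Φ :=
    continuous_id.sub (continuous_subtype_val.comp (hGcont.comp P.continuous))
  have hRperp : ∀ y ∈ R, P y = 0 := by
    intro y hy
    rw [hP, Submodule.orthogonalProjectionOnto_eq_zero_iff]
    exact Submodule.le_orthogonal_orthogonal R hy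
  have hΦR : ∀ y ∈ R, Φ y = y := by
    intro y hy
    simp [hΦ, hRperp y hy]
  have hKperp : ∀ x : H, P x = 0 → x ∈ R := by
    intro x hx
    have : x ∈ Rᗮᗮ := by
      rw [← Submodule.orthogonalProjectionOnto_eq_zero_iff]
      exact hx
    rw [Submodule.orthogonal_orthogonal_eq_closure] at this
    rwa [hRclosed.submodule_topologicalClosure_eq] at this
  have hΦD : ∀ d ∈ (S.domain : Set H), Φ d ∈ (S.domain : Set H) ∩ (R : Set H) := by
    intro d hd
    constructor
    · exact sub_mem hd (G (P d)).2
    · apply hKperp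
      have : P ((G (P d) : S.domain) : H) = P' (G (P d)) := rfl
      simp only [hΦ, map_sub, this]
      rw [← LinearMap.comp_apply, hG]
      simp
  -- Part 1
  have part1 : closure ((S.domain : Set H) ∩ (R : Set H)) = (R : Set H) := by
    apply Set.Subset.antisymm
    · refine (closure_mono Set.inter_subset_right).trans ?_
      rw [hRclosed.closure_eq]
    · intro y hy
      have h1 : y ∈ closure (S.domain : Set H) := hdense y
      have h2 : Φ y ∈ closure (Φ '' (S.domain : Set H)) :=
        (image_closure_subset_closure_image hΦcont) ⟨y, h1, rfl⟩
      rw [hΦR y hy] at h2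
      refine closure_mono ?_ h2
      rintro _ ⟨d, hd, rfl⟩
      exact hΦD d hd
  refine ⟨by rw [hRset, part1, hRclosed.closure_eq], ?_⟩
  -- Part 2
  apply Set.Subset.antisymm
  · apply closure_minimal _ hclosed
    rintro _ ⟨f, _, rfl⟩
    exact S.mem_graph f
  · intro p hp
    rw [SetLike.mem_coe, LinearPMap.mem_graph_iff] at hp
    obtain ⟨f, hf1, hf2⟩ := hp
    have hTfR : T f ∈ closure ((S.domain : Set H) ∩ (R : Set H)) := by
      rw [part1]; exact ⟨f, rfl⟩
    obtain ⟨g, hg, hgl⟩ := mem_closure_iff_seq_limit.mp hTfR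
    choose hgD hgR using fun n => hg n
    choose h hh using fun n => hgR n
    -- h n → f
    have hhf : Filter.Tendsto (fun n => ((h n : H))) Filter.atTop (𝓝 (f : H)) := by
      rw [tendsto_iff_norm_sub_tendsto_zero]
      have hb : ∀ n, ‖((h n : H)) - (f : H)‖ ≤ ‖g n - T f‖ / c := by
        intro n
        have h1 := hbd' (h n - f)
        rw [map_sub, hh] at h1
        rw [le_div_iff₀ hc, mul_comm]
        simpa using h1
      have h0 : Filter.Tendsto (fun n => ‖g n - T f‖ / c) Filter.atTop (𝓝 0) := by
        have := (tendsto_iff_norm_sub_tendsto_zero.mp hgl)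
        simpa using this.div_const c
      exact squeeze_zero (fun n => norm_nonneg _) hb h0
    have hSh : ∀ n, S (h n) = g n + lam • ((h n : H)) := by
      intro n
      have hx := hTapp (h n)
      rw [hh] at hx
      rw [hx]; abel
    have hShD : ∀ n, S (h n) ∈ S.domain := by
      intro n
      rw [hSh n]
      exact add_mem (hgD n) (Submodule.smul_mem _ _ (h n).2)
    have hShconv : Filter.Tendsto (fun n => S (h n)) Filter.atTop (𝓝 (S f)) := by
      simp_rw [hSh]
      have hlim : Filter.Tendsto (fun n => g n + lam • ((h n : H))) Filter.atTop
          (𝓝 (T f + lam • (f : H))) := hgl.add (hhf.const_smul lam)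
      have : T f + lam • (f : H) = S f := by rw [hTapp]; abel
      rwa [this] at hlim
    have hpe : p = (((f : H)), S f) := Prod.ext hf1.symm hf2.symm
    rw [hpe]
    exact mem_closure_of_tendsto (hhf.prodMk_nhds hShconv)
      (Filter.Eventually.of_forall fun n => ⟨h n, hShD n, rfl⟩)
end

section
/- Let F, G be bounded operators on a Hilbert space H. Then ran F + ran G = ran(FF* + GG*)^{1/2}. -/
open scoped ComplexConjugate Pointwise Topology

open ContinuousLinearMap in
/-- Range criterion: if `⟪y, x⟫` is dominated by `c * ‖T* x‖`, then `y ∈ ran T`. -/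
theorem aux_mem_range_of_inner_le
    {K H : Type*} [NormedAddCommGroup K] [InnerProductSpace ℂ K] [CompleteSpace K]
    [NormedAddCommGroup H] [InnerProductSpace ℂ H] [CompleteSpace H]
    (T : K →L[ℂ] H) (y : H) (c : ℝ)
    (h : ∀ x : H, ‖(inner ℂ y x : ℂ)‖ ≤ c * ‖adjoint T x‖) :
    y ∈ Set.range T := by
  set B : H →ₗ[ℂ] K := (adjoint T : H →L[ℂ] K).toLinearMap with hB
  set f : H →ₗ[ℂ] ℂ := ((innerSL ℂ y : H →L[ℂ] ℂ) : H →ₗ[ℂ] ℂ) with hf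
  have hker : LinearMap.ker B ≤ LinearMap.ker f := by
    intro x hx
    have hx' : adjoint T x = 0 := hx
    have h2 := h x
    rw [hx', norm_zero, mul_zero] at h2
    simpa [f] using norm_le_zero_iff.mp h2
  let e := LinearMap.quotKerEquivRange B
  let ℓ : LinearMap.range B →ₗ[ℂ] ℂ := (Submodule.liftQ _ f hker).comp e.symm.toLinearMap
  have hℓ : ∀ x : H, ℓ ⟨B x, LinearMap.mem_range_self B x⟩ = inner ℂ y x := by
    intro x
    have h3 : e (Submodule.Quotient.mk x) = ⟨B x, LinearMap.mem_range_self B x⟩ :=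
      Subtype.ext (LinearMap.quotKerEquivRange_apply_mk B x)
    simp only [ℓ, LinearMap.comp_apply, ← h3, LinearEquiv.coe_toLinearMap,
      LinearEquiv.symm_apply_apply, Submodule.liftQ_apply]
    rfl
  have hbound : ∀ u : LinearMap.range B, ‖ℓ u‖ ≤ max c 0 * ‖(u : K)‖ := by
    rintro ⟨-, x, rfl⟩
    rw [hℓ x]
    calc ‖(inner ℂ y x : ℂ)‖ ≤ c * ‖adjoint T x‖ := h x
      _ ≤ max c 0 * ‖adjoint T x‖ := by
          gcongr; exact le_max_left _ _
  let φ : LinearMap.range B →L[ℂ] ℂ := ℓ.mkContinuous (max c 0) hbound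
  obtain ⟨g, hg, -⟩ := exists_extension_norm_eq (LinearMap.range B) φ
  set z := (InnerProductSpace.toDual ℂ K).symm g with hz
  refine ⟨z, ?_⟩
  refine (ext_inner_right ℂ fun x => ?_)
  have h1 : (inner ℂ z (adjoint T x) : ℂ) = g (adjoint T x) := by
    simp [hz, InnerProductSpace.toDual_symm_apply]
  have h2 : g (adjoint T x) = ℓ ⟨B x, LinearMap.mem_range_self B x⟩ := by
    have := hg ⟨B x, LinearMap.mem_range_self B x⟩
    exact this
  calc (inner ℂ (T z) x : ℂ) = inner ℂ z (adjoint T x) := by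
        rw [← adjoint_adjoint T, adjoint_inner_left, adjoint_adjoint]
    _ = inner ℂ y x := by rw [h1, h2, hℓ]

set_option maxHeartbeats 1000000 in
open ContinuousLinearMap in
/-- For bounded operators `F, G` on a Hilbert space: `ran F + ran G = ran (FF* + GG*)^{1/2}`. -/
theorem range_add_range_eq_range_sqrt
    {H : Type*} [NormedAddCommGroup H] [InnerProductSpace ℂ H] [CompleteSpace H]
    (F G : H →L[ℂ] H) :
    Set.range F + Set.range G =
      Set.range
        (CFC.sqrt (F * ContinuousLinearMap.adjoint F + G * ContinuousLinearMap.adjoint G) :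
          H →L[ℂ] H) := by
  set S : H →L[ℂ] H := F * adjoint F + G * adjoint G with hSdef
  have hS : 0 ≤ S := by
    rw [nonneg_iff_isPositive]
    have h1 : (F ∘L (1 : H →L[ℂ] H) ∘L adjoint F).IsPositive := isPositive_one.conj_adjoint F
    have h2 : (G ∘L (1 : H →L[ℂ] H) ∘L adjoint G).IsPositive := isPositive_one.conj_adjoint G
    have e1 : F ∘L (1 : H →L[ℂ] H) ∘L adjoint F = F * adjoint F := by ext x; rfl
    have e2 : G ∘L (1 : H →L[ℂ] H) ∘L adjoint G = G * adjoint G := by ext x; rfl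
    rw [e1] at h1; rw [e2] at h2
    exact h1.add h2
  set A : H →L[ℂ] H := CFC.sqrt S with hAdef
  have hA : IsSelfAdjoint A := IsSelfAdjoint.of_nonneg (CFC.sqrt_nonneg S)
  have hAadj : adjoint A = A := isSelfAdjoint_iff'.mp hA
  have hAA : A * A = S := CFC.sqrt_mul_sqrt_self S hS
  -- the key norm identity for `A`
  have hAx : ∀ x : H, ‖A x‖ ^ 2 = ‖adjoint F x‖ ^ 2 + ‖adjoint G x‖ ^ 2 := by
    intro x
    have hF : (inner ℂ (F (adjoint F x)) x : ℂ) = inner ℂ (adjoint F x) (adjoint F x) := by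
      have h := adjoint_inner_left (adjoint F) x (adjoint F x)
      rwa [adjoint_adjoint] at h
    have hG : (inner ℂ (G (adjoint G x)) x : ℂ) = inner ℂ (adjoint G x) (adjoint G x) := by
      have h := adjoint_inner_left (adjoint G) x (adjoint G x)
      rwa [adjoint_adjoint] at h
    have ee : (inner ℂ (A x) (A x) : ℂ)
        = inner ℂ (adjoint F x) (adjoint F x) + inner ℂ (adjoint G x) (adjoint G x) := by
      calc (inner ℂ (A x) (A x) : ℂ) = inner ℂ ((adjoint A) (A x)) x :=
            (adjoint_inner_left A x (A x)).symm
        _ = inner ℂ (A (A x)) x := by rw [hAadj]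
        _ = inner ℂ (S x) x := by rw [← ContinuousLinearMap.mul_apply, hAA]
        _ = inner ℂ (F (adjoint F x)) x + inner ℂ (G (adjoint G x)) x := by
            rw [hSdef]; simp [inner_add_left]
        _ = _ := by rw [hF, hG]
    have h4 := congrArg Complex.re ee
    simpa [← inner_self_eq_norm_sq (𝕜 := ℂ), RCLike.re_to_complex] using h4
  have hFle : ∀ x : H, ‖adjoint F x‖ ≤ ‖A x‖ := by
    intro x; nlinarith [hAx x, norm_nonneg (adjoint F x), norm_nonneg (A x),
      norm_nonneg (adjoint G x), sq_nonneg (‖adjoint G x‖)]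
  have hGle : ∀ x : H, ‖adjoint G x‖ ≤ ‖A x‖ := by
    intro x; nlinarith [hAx x, norm_nonneg (adjoint G x), norm_nonneg (A x),
      norm_nonneg (adjoint F x), sq_nonneg (‖adjoint F x‖)]
  -- the operator `T : H ⊕₂ H → H`, `(x, y) ↦ F x + G y`
  set K := WithLp 2 (H × H) with hK
  set eqv : K ≃L[ℂ] H × H := WithLp.prodContinuousLinearEquiv 2 ℂ H H with heqv
  set T : K →L[ℂ] H :=
    (F.comp (ContinuousLinearMap.fst ℂ H H) + G.comp (ContinuousLinearMap.snd ℂ H H)).comp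
      (eqv : K →L[ℂ] H × H) with hTdef
  have hT : ∀ u : K, T u = F u.fst + G u.snd := fun u => rfl
  set T' : H →L[ℂ] K :=
    ((eqv.symm : H × H →L[ℂ] K)).comp ((adjoint F).prod (adjoint G)) with hT'def
  have hT' : ∀ x : H, (T' x).fst = adjoint F x ∧ (T' x).snd = adjoint G x := fun x => ⟨rfl, rfl⟩
  have hadj : T' = adjoint T := by
    rw [eq_adjoint_iff]
    intro x u
    rw [WithLp.prod_inner_apply, WithLp.ofLp_fst, WithLp.ofLp_snd, WithLp.ofLp_fst,
      WithLp.ofLp_snd, (hT' x).1, (hT' x).2, hT u, inner_add_right,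
      adjoint_inner_left, adjoint_inner_left]
  have hTA : ∀ x : H, ‖adjoint T x‖ = ‖A x‖ := by
    intro x
    have h5 : ‖adjoint T x‖ ^ 2 = ‖adjoint F x‖ ^ 2 + ‖adjoint G x‖ ^ 2 := by
      have e6 : (inner ℂ (adjoint T x) (adjoint T x) : ℂ)
          = inner ℂ (adjoint F x) (adjoint F x) + inner ℂ (adjoint G x) (adjoint G x) := by
        rw [← hadj, WithLp.prod_inner_apply, WithLp.ofLp_fst, WithLp.ofLp_snd, (hT' x).1, (hT' x).2]
      have h6 := congrArg Complex.re e6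
      rw [← inner_self_eq_norm_sq (𝕜 := ℂ) (adjoint T x), RCLike.re_to_complex, h6,
        ← RCLike.re_to_complex, map_add, inner_self_eq_norm_sq, inner_self_eq_norm_sq]
    rw [← hAx x] at h5
    exact (pow_left_inj₀ (norm_nonneg _) (norm_nonneg _) two_ne_zero).mp h5
  have hrange : Set.range T = Set.range F + Set.range G := by
    ext z
    constructor
    · rintro ⟨u, rfl⟩
      rw [hT u]
      exact Set.add_mem_add (Set.mem_range_self _) (Set.mem_range_self _)
    · rintro ⟨-, ⟨a, rfl⟩, -, ⟨b, rfl⟩, rfl⟩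
      exact ⟨(WithLp.equiv 2 (H × H)).symm (a, b), rfl⟩
  apply Set.Subset.antisymm
  · rintro y ⟨-, ⟨a, rfl⟩, -, ⟨b, rfl⟩, rfl⟩
    apply aux_mem_range_of_inner_le A (F a + G b) (‖a‖ + ‖b‖)
    intro x
    rw [hAadj]
    have e7 : (inner ℂ (F a + G b) x : ℂ) = inner ℂ a (adjoint F x) + inner ℂ b (adjoint G x) := by
      rw [inner_add_left, adjoint_inner_right, adjoint_inner_right]
    rw [e7]
    calc ‖(inner ℂ a (adjoint F x) + inner ℂ b (adjoint G x) : ℂ)‖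
        ≤ ‖(inner ℂ a (adjoint F x) : ℂ)‖ + ‖(inner ℂ b (adjoint G x) : ℂ)‖ := norm_add_le _ _
      _ ≤ ‖a‖ * ‖adjoint F x‖ + ‖b‖ * ‖adjoint G x‖ := by
          gcongr <;> exact norm_inner_le_norm _ _
      _ ≤ ‖a‖ * ‖A x‖ + ‖b‖ * ‖A x‖ := by
          gcongr
          · exact hFle x
          · exact hGle x
      _ = (‖a‖ + ‖b‖) * ‖A x‖ := by ring
  · rintro y ⟨u, rfl⟩
    rw [← hrange]
    apply aux_mem_range_of_inner_le T (A u) ‖u‖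
    intro x
    rw [hTA x]
    have e8 : (inner ℂ (A u) x : ℂ) = inner ℂ u (A x) := by
      rw [← hAadj, adjoint_inner_left, hAadj]
    rw [e8]
    exact norm_inner_le_norm _ _
end

section
/- Let T be a maximal dissipative operator with Hermitian domain S_T = {f ∈ dom T : Im(Tf, f) = 0}. Then S_T = S_{T*} = {f ∈ dom T ∩ dom T* : Tf = T*f}, and the restriction S = T↾S_T is a closed symmetric operator extended by both T and T*. -/
open scoped ComplexConjugate Pointwise Topology

/-- A linear operator `T` is dissipative if `Im ⟪Tf, f⟫ ≥ 0` for all `f` in its domain. -/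
def IsDissipative {E : Type*} [NormedAddCommGroup E] [InnerProductSpace ℂ E]
    (T : E →ₗ.[ℂ] E) : Prop :=
  ∀ f : T.domain, 0 ≤ (inner ℂ (T f) ((f : E)) : ℂ).im

/-- A dissipative operator is maximal dissipative if it has no proper dissipative extension. -/
def IsMaxDissipative {E : Type*} [NormedAddCommGroup E] [InnerProductSpace ℂ E]
    (T : E →ₗ.[ℂ] E) : Prop :=
  IsDissipative T ∧ ∀ T' : E →ₗ.[ℂ] E, T ≤ T' → IsDissipative T' → T' = T

private lemma calc1 (z a b c w : ℂ) (s : ℝ) (hz : z.im = 0) (hb : b = starRingEnd ℂ (a - w)) :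
    (z + (-Complex.I*s*(starRingEnd ℂ w))*a + (starRingEnd ℂ (-Complex.I*s*(starRingEnd ℂ w)))*b
      + (starRingEnd ℂ (-Complex.I*s*(starRingEnd ℂ w)))*(-Complex.I*s*(starRingEnd ℂ w))*c).im
    = -s*Complex.normSq w + s^2*(Complex.normSq w)*c.im := by
  subst hb
  simp [Complex.ext_iff, Complex.normSq_apply, hz, mul_comm, mul_assoc, mul_left_comm]
  ring

private lemma calc2 (z a b c : ℂ) (hb : b.im = 0) :
    (z + c*a + (starRingEnd ℂ c)*(starRingEnd ℂ a) + ((starRingEnd ℂ c)*c)*b).im = z.im := by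
  simp [Complex.add_im, Complex.mul_im, Complex.conj_im, Complex.conj_re, hb]
  ring

private lemma cs_lemma {E : Type*} [NormedAddCommGroup E] [InnerProductSpace ℂ E]
    {T : E →ₗ.[ℂ] E} (hd : IsDissipative T) {f : E} (hf : f ∈ T.domain)
    (h0 : (inner ℂ (T ⟨f, hf⟩) f : ℂ).im = 0) (g : T.domain) :
    (inner ℂ (T ⟨f, hf⟩) (g : E) : ℂ) = inner ℂ f (T g) := by
  set F : T.domain := ⟨f, hf⟩ with hF
  set a : ℂ := inner ℂ (T F) (g : E) with ha
  set b : ℂ := inner ℂ (T g) (f : E) with hbdef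
  set c : ℂ := inner ℂ (T g) (g : E) with hc
  set w : ℂ := a - (starRingEnd ℂ) b with hw
  have hb : b = starRingEnd ℂ (a - w) := by rw [hw]; simp
  suffices hw0 : w = 0 by
    have : a = (starRingEnd ℂ) b := by rw [← sub_eq_zero, ← hw, hw0]
    rw [this, hbdef, inner_conj_symm]
  have key : ∀ s : ℝ, 0 ≤ -s * Complex.normSq w + s^2 * Complex.normSq w * c.im := by
    intro s
    set t : ℂ := -Complex.I * s * (starRingEnd ℂ) w with ht
    have hdis := hd (F + t • g)
    have hexp : (inner ℂ (T (F + t • g)) (((F + t • g : T.domain)) : E) : ℂ)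
        = (inner ℂ (T F) (f : E) : ℂ) + t * a + (starRingEnd ℂ t) * b
          + (starRingEnd ℂ t) * t * c := by
      have h1 : T (F + t • g) = T F + t • T g := by rw [LinearPMap.map_add, LinearPMap.map_smul]
      have h2 : ((F + t • g : T.domain) : E) = f + t • (g : E) := rfl
      rw [h1, h2]
      simp only [inner_add_left, inner_add_right, inner_smul_left, inner_smul_right, ← ha,
        ← hbdef, ← hc]
      ring
    rw [hexp] at hdis
    rwa [ht, calc1 _ a b c w s h0 hb] at hdis
  have hC : 0 ≤ c.im := hd g
  have hN : 0 ≤ Complex.normSq w := Complex.normSq_nonneg w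
  by_contra hne
  have hNpos : 0 < Complex.normSq w := by
    rcases lt_or_eq_of_le hN with h | h
    · exact h
    · exact absurd (Complex.normSq_eq_zero.mp h.symm) hne
  have hpos : (0:ℝ) < c.im + 1 := by linarith
  set s : ℝ := 1/(c.im+1) with hsdef
  have hspos : 0 < s := by positivity
  have hs := key s
  have h1 : s * c.im < 1 := by
    rw [hsdef, div_mul_eq_mul_div, one_mul]
    exact (div_lt_one hpos).mpr (by linarith)
  have hs' : 0 ≤ s * Complex.normSq w * (s * c.im - 1) := by nlinarith [hs]
  have hneg : s * Complex.normSq w * (s * c.im - 1) < 0 :=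
    mul_neg_of_pos_of_neg (mul_pos hspos hNpos) (by linarith)
  linarith

private lemma adj_eq {H : Type*} [NormedAddCommGroup H] [InnerProductSpace ℂ H] [CompleteSpace H]
    {T : H →ₗ.[ℂ] H} (hdense : Dense (T.domain : Set H)) (hd : IsDissipative T)
    {f : H} (hf : f ∈ T.domain) (h0 : (inner ℂ (T ⟨f, hf⟩) f : ℂ).im = 0) :
    ∃ hf' : f ∈ T.adjoint.domain, T.adjoint ⟨f, hf'⟩ = T ⟨f, hf⟩ := by
  have hmem : f ∈ T.adjoint.domain :=
    LinearPMap.mem_adjoint_domain_of_exists _ ⟨T ⟨f, hf⟩, fun x => cs_lemma hd hf h0 x⟩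
  exact ⟨hmem, LinearPMap.adjoint_apply_eq hdense ⟨f, hmem⟩ (fun x => cs_lemma hd hf h0 x)⟩

private lemma im_adj_zero {H : Type*} [NormedAddCommGroup H] [InnerProductSpace ℂ H]
    [CompleteSpace H] {T : H →ₗ.[ℂ] H} (hdense : Dense (T.domain : Set H))
    {f : H} (hf : f ∈ T.domain) (hf' : f ∈ T.adjoint.domain)
    (h0 : (inner ℂ (T.adjoint ⟨f, hf'⟩) f : ℂ).im = 0) :
    (inner ℂ (T ⟨f, hf⟩) f : ℂ).im = 0 := by
  have h1 : (inner ℂ (T.adjoint ⟨f, hf'⟩) f : ℂ) = inner ℂ f (T ⟨f, hf⟩) :=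
    LinearPMap.adjoint_isFormalAdjoint hdense ⟨f, hf'⟩ ⟨f, hf⟩
  have h1' : (inner ℂ (T.adjoint ⟨f, hf'⟩) f : ℂ)
      = starRingEnd ℂ (inner ℂ (T ⟨f, hf⟩) f : ℂ) :=
    h1.trans (inner_conj_symm f (T ⟨f, hf⟩)).symm
  rw [h1', Complex.conj_im, neg_eq_zero] at h0
  exact h0

private lemma mem_dom {H : Type*} [NormedAddCommGroup H] [InnerProductSpace ℂ H] [CompleteSpace H]
    {T : H →ₗ.[ℂ] H} (hdense : Dense (T.domain : Set H)) (hT : IsMaxDissipative T)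
    {f : H} (hf' : f ∈ T.adjoint.domain)
    (h0 : (inner ℂ (T.adjoint ⟨f, hf'⟩) f : ℂ).im = 0) : f ∈ T.domain := by
  by_contra hfd
  set y : H := T.adjoint ⟨f, hf'⟩ with hy
  set T' := T.supSpanSingleton f y hfd with hT'
  have hdomf : f ∈ T'.domain := by
    rw [hT', LinearPMap.domain_supSpanSingleton]
    exact Submodule.mem_sup_right (Submodule.mem_span_singleton_self f)
  have happ : ∀ (g : H) (hg : g ∈ T.domain) (c : ℂ) (hm : g + c • f ∈ T'.domain),
      T' ⟨g + c • f, hm⟩ = T ⟨g, hg⟩ + c • y := by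
    intro g hg c hm
    exact LinearPMap.supSpanSingleton_apply_mk T f y hfd g hg c
  have hle : T ≤ T' := by
    constructor
    · rw [hT', LinearPMap.domain_supSpanSingleton]; exact le_sup_left
    · intro x z hxz
      have hzm : ((x : H) + (0:ℂ) • f) ∈ T'.domain := by
        rw [hT', LinearPMap.domain_supSpanSingleton]
        exact Submodule.mem_sup.2 ⟨x, x.2, (0:ℂ) • f,
          Submodule.smul_mem _ _ (Submodule.mem_span_singleton_self f), rfl⟩
      have hz : z = ⟨(x : H) + (0:ℂ) • f, hzm⟩ := Subtype.ext (by rw [← hxz]; simp)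
      rw [hz, happ (x : H) x.2 0 hzm]
      simp
  have hdis : IsDissipative T' := by
    intro u
    have hu : (u : H) ∈ T.domain ⊔ (ℂ ∙ f) := u.2
    obtain ⟨g, hg, z, hz, hgz⟩ := Submodule.mem_sup.1 hu
    obtain ⟨c, rfl⟩ := Submodule.mem_span_singleton.1 hz
    have hm : g + c • f ∈ T'.domain := by rw [hgz]; exact u.2
    have hu' : u = ⟨g + c • f, hm⟩ := Subtype.ext hgz.symm
    rw [hu', happ g hg c hm]
    have hyg : (inner ℂ y g : ℂ) = starRingEnd ℂ (inner ℂ (T ⟨g, hg⟩) f : ℂ) := by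
      have h1 : (inner ℂ y g : ℂ) = inner ℂ f (T ⟨g, hg⟩) :=
        LinearPMap.adjoint_isFormalAdjoint hdense ⟨f, hf'⟩ ⟨g, hg⟩
      exact h1.trans (inner_conj_symm f (T ⟨g, hg⟩)).symm
    have hexp : (inner ℂ (T ⟨g, hg⟩ + c • y) ((⟨g + c • f, hm⟩ : T'.domain) : H) : ℂ)
        = (inner ℂ (T ⟨g, hg⟩) g : ℂ) + c * (inner ℂ (T ⟨g, hg⟩) f : ℂ)
          + (starRingEnd ℂ c) * (starRingEnd ℂ (inner ℂ (T ⟨g, hg⟩) f : ℂ))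
          + ((starRingEnd ℂ c) * c) * (inner ℂ y f : ℂ) := by
      show (inner ℂ (T ⟨g, hg⟩ + c • y) (g + c • f) : ℂ) = _
      simp only [inner_add_left, inner_add_right, inner_smul_left, inner_smul_right, hyg]
      ring
    rw [hexp, calc2 _ _ _ _ h0]
    exact hT.1 ⟨g, hg⟩
  have heq := hT.2 T' hle hdis
  rw [heq] at hdomf
  exact hfd hdomf

/-- For a maximal dissipative `T`: the Hermitian domain `S_T = {f ∈ dom T : Im⟪Tf,f⟫ = 0}`
equals `S_{T*}` and `{f ∈ dom T ∩ dom T* : Tf = T*f}`, and the restriction of `T` to `S_T`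
is a closed symmetric operator extended by both `T` and `T*`. -/
theorem hermitian_domain_eq
    {H : Type*} [NormedAddCommGroup H] [InnerProductSpace ℂ H] [CompleteSpace H]
    (T : H →ₗ.[ℂ] H) (hdense : Dense (T.domain : Set H)) (hT : IsMaxDissipative T) :
    ({f : H | ∃ hf : f ∈ T.domain, (inner ℂ (T ⟨f, hf⟩) f : ℂ).im = 0} =
        {f : H | ∃ hf : f ∈ T.adjoint.domain, (inner ℂ (T.adjoint ⟨f, hf⟩) f : ℂ).im = 0}) ∧
      ({f : H | ∃ hf : f ∈ T.domain, (inner ℂ (T ⟨f, hf⟩) f : ℂ).im = 0} =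
        {f : H | ∃ (hf : f ∈ T.domain) (hf' : f ∈ T.adjoint.domain),
          T ⟨f, hf⟩ = T.adjoint ⟨f, hf'⟩}) ∧
      (∀ (f g : H) (hf : f ∈ T.domain) (hg : g ∈ T.domain),
        (inner ℂ (T ⟨f, hf⟩) f : ℂ).im = 0 → (inner ℂ (T ⟨g, hg⟩) g : ℂ).im = 0 →
        (inner ℂ (T ⟨f, hf⟩) g : ℂ) = inner ℂ f (T ⟨g, hg⟩)) ∧
      IsClosed {p : H × H |
        ∃ hf : p.1 ∈ T.domain, (inner ℂ (T ⟨p.1, hf⟩) p.1 : ℂ).im = 0 ∧ p.2 = T ⟨p.1, hf⟩} := by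
  refine ⟨?_, ?_, ?_, ?_⟩
  · ext f
    constructor
    · rintro ⟨hf, h0⟩
      obtain ⟨hf', heq⟩ := adj_eq hdense hT.1 hf h0
      exact ⟨hf', by rw [heq]; exact h0⟩
    · rintro ⟨hf', h0⟩
      have hf := mem_dom hdense hT hf' h0
      exact ⟨hf, im_adj_zero hdense hf hf' h0⟩
  · ext f
    constructor
    · rintro ⟨hf, h0⟩
      obtain ⟨hf', heq⟩ := adj_eq hdense hT.1 hf h0
      exact ⟨hf, hf', heq.symm⟩
    · rintro ⟨hf, hf', heq⟩
      refine ⟨hf, ?_⟩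
      have h1 : (inner ℂ (T.adjoint ⟨f, hf'⟩) f : ℂ) = inner ℂ f (T ⟨f, hf⟩) :=
        LinearPMap.adjoint_isFormalAdjoint hdense ⟨f, hf'⟩ ⟨f, hf⟩
      rw [← heq] at h1
      have h2 := congrArg Complex.im (h1.trans (inner_conj_symm f (T ⟨f, hf⟩)).symm)
      simp only [Complex.conj_im] at h2
      linarith
  · intro f g hf hg h0f _
    exact cs_lemma hT.1 hf h0f ⟨g, hg⟩
  · have hA : IsClosed {p : H × H | ∀ x : T.domain, (inner ℂ p.2 (x : H) : ℂ) = inner ℂ p.1 (T x)} := by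
      have : {p : H × H | ∀ x : T.domain, (inner ℂ p.2 (x : H) : ℂ) = inner ℂ p.1 (T x)}
          = ⋂ x : T.domain, {p : H × H | (inner ℂ p.2 (x : H) : ℂ) = inner ℂ p.1 (T x)} := by
        ext p; simp [Set.mem_iInter]
      rw [this]
      exact isClosed_iInter fun x => isClosed_eq
        (Continuous.inner continuous_snd continuous_const)
        (Continuous.inner continuous_fst continuous_const)
    have hB : IsClosed {p : H × H | (inner ℂ p.2 p.1 : ℂ).im = 0} :=
      isClosed_eq (Complex.continuous_im.comp (Continuous.inner continuous_snd continuous_fst))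
        continuous_const
    have hset : {p : H × H |
        ∃ hf : p.1 ∈ T.domain, (inner ℂ (T ⟨p.1, hf⟩) p.1 : ℂ).im = 0 ∧ p.2 = T ⟨p.1, hf⟩}
        = {p : H × H | ∀ x : T.domain, (inner ℂ p.2 (x : H) : ℂ) = inner ℂ p.1 (T x)}
          ∩ {p : H × H | (inner ℂ p.2 p.1 : ℂ).im = 0} := by
      ext p
      constructor
      · rintro ⟨hf, h0, hp2⟩
        refine ⟨fun x => ?_, ?_⟩
        · rw [hp2]; exact cs_lemma hT.1 hf h0 x
        · show (inner ℂ p.2 p.1 : ℂ).im = 0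
          rw [hp2]; exact h0
      · rintro ⟨hAp, hBp⟩
        have hmem : p.1 ∈ T.adjoint.domain :=
          LinearPMap.mem_adjoint_domain_of_exists _ ⟨p.2, hAp⟩
        have hadj : T.adjoint ⟨p.1, hmem⟩ = p.2 :=
          LinearPMap.adjoint_apply_eq hdense ⟨p.1, hmem⟩ hAp
        have h0' : (inner ℂ (T.adjoint ⟨p.1, hmem⟩) p.1 : ℂ).im = 0 := by rw [hadj]; exact hBp
        have hf := mem_dom hdense hT hmem h0'
        have h0 := im_adj_zero hdense hf hmem h0'
        obtain ⟨hf'2, heq⟩ := adj_eq hdense hT.1 hf h0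
        refine ⟨hf, h0, ?_⟩
        rw [← hadj]
        exact heq
    rw [hset]
    exact hA.inter hB
end

section
/- Let T be a maximal dissipative operator whose quadratic form γ_T[f] = Im(Tf, f) is singular (T ∈ D_sing). Then the Hermitian domain satisfies S_T = dom T ∩ dom T*. -/
open scoped ComplexConjugate Pointwise Topology

/-- The nonnegative form `γ_T[f] = Im ⟪Tf, f⟫` of `T` is singular: every `f ∈ dom T` can be
approximated by `f_n ∈ dom T` with `γ_T[f_n] → 0`. Maximal dissipative operators with this
property form the class `D_sing`. -/
def IsSingularImForm {E : Type*} [NormedAddCommGroup E] [InnerProductSpace ℂ E]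
    (T : E →ₗ.[ℂ] E) : Prop :=
  ∀ f : T.domain, ∃ g : ℕ → T.domain,
    Filter.Tendsto (fun n => ((g n : E))) Filter.atTop (𝓝 (f : E)) ∧
    Filter.Tendsto (fun n => (inner ℂ (T (g n)) ((g n : E)) : ℂ).im) Filter.atTop (𝓝 (0 : ℝ))

lemma neg_I_half_mul_sub_conj (z : ℂ) :
    (-Complex.I/2) * (z - (starRingEnd ℂ) z) = (z.im : ℂ) := by
  simp [Complex.ext_iff, Complex.mul_re, Complex.mul_im, Complex.div_re, Complex.div_im]
  ring_nf

/-- The imaginary part of the form of a dissipative operator, as a nonnegative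
Hermitian sesquilinear form on the domain. -/
noncomputable def gammaCore {E : Type*} [NormedAddCommGroup E] [InnerProductSpace ℂ E]
    (T : E →ₗ.[ℂ] E) (hdiss : IsDissipative T) : PreInnerProductSpace.Core ℂ T.domain where
  inner f g := (-Complex.I/2) * ((inner ℂ (T f) ((g : E)) : ℂ) - (inner ℂ ((f : E)) (T g) : ℂ))
  conj_inner_symm x y := by
    simp only [map_mul, map_sub, inner_conj_symm, map_div₀, map_neg, Complex.conj_I,
      map_ofNat]
    ring_nf
  re_inner_nonneg x := by
    have h1 : (inner ℂ ((x : E)) (T x) : ℂ) = (starRingEnd ℂ) (inner ℂ (T x) ((x : E)) : ℂ) :=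
      (inner_conj_symm _ _).symm
    show 0 ≤ RCLike.re ((-Complex.I/2) *
      ((inner ℂ (T x) ((x : E)) : ℂ) - (inner ℂ ((x : E)) (T x) : ℂ)))
    rw [h1, neg_I_half_mul_sub_conj, RCLike.re_to_complex, Complex.ofReal_re]
    exact hdiss x
  add_left x y z := by
    show (-Complex.I/2) * ((inner ℂ (T (x + y)) ((z : E)) : ℂ) - inner ℂ (((x + y : T.domain) : E)) (T z)) = _
    rw [T.map_add, Submodule.coe_add, inner_add_left, inner_add_left]
    ring_nf
  smul_left x y r := by
    show (-Complex.I/2) * ((inner ℂ (T (r • x)) ((y : E)) : ℂ) - inner ℂ (((r • x : T.domain) : E)) (T y)) = _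
    rw [T.map_smul, Submodule.coe_smul, inner_smul_left, inner_smul_left]
    ring_nf

lemma gammaCore_self {E : Type*} [NormedAddCommGroup E] [InnerProductSpace ℂ E]
    (T : E →ₗ.[ℂ] E) (hdiss : IsDissipative T) (f : T.domain) :
    (gammaCore T hdiss).inner f f = (((inner ℂ (T f) ((f : E)) : ℂ).im : ℝ) : ℂ) := by
  show (-Complex.I/2) * ((inner ℂ (T f) ((f : E)) : ℂ) - (inner ℂ ((f : E)) (T f) : ℂ)) = _
  rw [← inner_conj_symm ((f : E)) (T f), neg_I_half_mul_sub_conj]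

/-- Cauchy–Schwarz for the singular form. -/
lemma gamma_cs {E : Type*} [NormedAddCommGroup E] [InnerProductSpace ℂ E]
    (T : E →ₗ.[ℂ] E) (hdiss : IsDissipative T) (x y : T.domain) :
    ‖(gammaCore T hdiss).inner x y‖ ^ 2 ≤
      (inner ℂ (T x) ((x : E)) : ℂ).im * (inner ℂ (T y) ((y : E)) : ℂ).im := by
  have cs := @InnerProductSpace.Core.inner_mul_inner_self_le ℂ T.domain _ _ _
    (gammaCore T hdiss) x y
  have hsymm : ‖(gammaCore T hdiss).inner y x‖ = ‖(gammaCore T hdiss).inner x y‖ := by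
    rw [← (gammaCore T hdiss).conj_inner_symm y x]
    exact RCLike.norm_conj _
  calc ‖(gammaCore T hdiss).inner x y‖ ^ 2
      = ‖(gammaCore T hdiss).inner x y‖ * ‖(gammaCore T hdiss).inner y x‖ := by
        rw [hsymm]; ring
    _ ≤ RCLike.re ((gammaCore T hdiss).inner x x) * RCLike.re ((gammaCore T hdiss).inner y y) := cs
    _ = (inner ℂ (T x) ((x : E)) : ℂ).im * (inner ℂ (T y) ((y : E)) : ℂ).im := by
        rw [gammaCore_self, gammaCore_self, RCLike.re_to_complex, RCLike.re_to_complex,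
          Complex.ofReal_re, Complex.ofReal_re]

/-- If `T` is maximal dissipative and its form `γ_T` is singular (`T ∈ D_sing`), then the
Hermitian domain satisfies `S_T = dom T ∩ dom T*`. -/
theorem hermitian_domain_eq_inter_of_singular
    {H : Type*} [NormedAddCommGroup H] [InnerProductSpace ℂ H] [CompleteSpace H]
    (T : H →ₗ.[ℂ] H) (hdense : Dense (T.domain : Set H)) (hT : IsMaxDissipative T)
    (hsing : IsSingularImForm T) :
    {f : H | ∃ hf : f ∈ T.domain, (inner ℂ (T ⟨f, hf⟩) f : ℂ).im = 0} =
      (T.domain : Set H) ∩ (T.adjoint.domain : Set H) := by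
  have hdiss := hT.1
  ext f
  constructor
  · rintro ⟨hf, him⟩
    refine ⟨hf, ?_⟩
    set fz : T.domain := ⟨f, hf⟩
    refine T.mem_adjoint_domain_of_exists f ⟨T fz, fun g => ?_⟩
    -- need : ⟪T fz, g⟫ = ⟪f, T g⟫, i.e. B fz g = 0
    have hb : (gammaCore T hdiss).inner fz g = 0 := by
      have := gamma_cs T hdiss fz g
      rw [him, zero_mul] at this
      have h0 : ‖(gammaCore T hdiss).inner fz g‖ = 0 := by
        nlinarith [norm_nonneg ((gammaCore T hdiss).inner fz g)]
      exact norm_eq_zero.mp h0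
    have hb' : (inner ℂ (T fz) ((g : H)) : ℂ) - (inner ℂ ((fz : H)) (T g) : ℂ) = 0 := by
      have hI : (-Complex.I/2 : ℂ) ≠ 0 := by
        simp [Complex.ext_iff]
      rcases mul_eq_zero.mp hb with h | h
      · exact absurd h hI
      · exact h
    have := sub_eq_zero.mp hb'
    exact this
  · rintro ⟨hf1, hf2⟩
    refine ⟨hf1, ?_⟩
    set fz : T.domain := ⟨f, hf1⟩
    set f₂ : T.adjoint.domain := ⟨f, hf2⟩
    obtain ⟨g, hg1, hg2⟩ := hsing fz
    set z : ℂ := inner ℂ (T fz) f with hz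
    -- rewrite B fz (g n) using the adjoint
    have hrw : ∀ n, (gammaCore T hdiss).inner fz (g n)
        = (-Complex.I/2) * (inner ℂ (T fz - T.adjoint f₂) ((g n : H)) : ℂ) := by
      intro n
      have h1 : (inner ℂ ((fz : H)) (T (g n)) : ℂ) = inner ℂ (T.adjoint f₂) ((g n : H)) :=
        (T.adjoint_isFormalAdjoint hdense f₂ (g n)).symm
      show (-Complex.I/2) * ((inner ℂ (T fz) ((g n : H)) : ℂ) - inner ℂ ((fz : H)) (T (g n))) = _
      rw [h1, inner_sub_left]
    -- first limit: B fz (g n) → Im z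
    have hlim1 : Filter.Tendsto (fun n => (gammaCore T hdiss).inner fz (g n))
        Filter.atTop (𝓝 ((z.im : ℝ) : ℂ)) := by
      have ht : Filter.Tendsto (fun n => (-Complex.I/2) *
          (inner ℂ (T fz - T.adjoint f₂) ((g n : H)) : ℂ)) Filter.atTop
          (𝓝 ((-Complex.I/2) * (inner ℂ (T fz - T.adjoint f₂) f : ℂ))) :=
        (Filter.Tendsto.inner tendsto_const_nhds hg1).const_mul _
      have heq : (-Complex.I/2) * (inner ℂ (T fz - T.adjoint f₂) f : ℂ) = ((z.im : ℝ) : ℂ) := by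
        have h2 : (inner ℂ (T.adjoint f₂) f : ℂ) = (starRingEnd ℂ) z := by
          have h3 : (inner ℂ (T.adjoint f₂) ((fz : H)) : ℂ) = inner ℂ ((f₂ : H)) (T fz) :=
            T.adjoint_isFormalAdjoint hdense f₂ fz
          have h4 : (inner ℂ ((f₂ : H)) (T fz) : ℂ) = (starRingEnd ℂ) (inner ℂ (T fz) ((f₂ : H)) : ℂ) :=
            (inner_conj_symm _ _).symm
          exact h3.trans h4
        rw [inner_sub_left, h2, ← hz, neg_I_half_mul_sub_conj]
      rw [heq] at ht
      refine ht.congr fun n => (hrw n).symm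
    -- second limit: B fz (g n) → 0
    have hlim2 : Filter.Tendsto (fun n => (gammaCore T hdiss).inner fz (g n))
        Filter.atTop (𝓝 (0 : ℂ)) := by
      rw [tendsto_zero_iff_norm_tendsto_zero]
      have hsq : Filter.Tendsto (fun n => ‖(gammaCore T hdiss).inner fz (g n)‖ ^ 2)
          Filter.atTop (𝓝 (0 : ℝ)) := by
        have hub : Filter.Tendsto
            (fun n => z.im * (inner ℂ (T (g n)) ((g n : H)) : ℂ).im)
            Filter.atTop (𝓝 (0 : ℝ)) := by
          have := hg2.const_mul z.im
          simpa using this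
        refine squeeze_zero (fun n => sq_nonneg _) (fun n => ?_) hub
        exact gamma_cs T hdiss fz (g n)
      have := (Real.continuous_sqrt.tendsto 0).comp hsq
      simp only [Function.comp_def, Real.sqrt_zero] at this
      refine this.congr fun n => ?_
      rw [Real.sqrt_sq (norm_nonneg _)]
    have h0 : ((z.im : ℝ) : ℂ) = 0 := tendsto_nhds_unique hlim1 hlim2
    exact_mod_cast h0
end

section
/- Let S be a closed densely defined nonnegative symmetric operator (so (Sf, f) ≥ 0 on dom S) and z ∈ ℂ₊ with Re z < 0. Then the compression A_z of the Shtraus extension S̃_z onto M_z̄ is sectorial with vertex at the origin and semi-angle |arg(−z)|, i.e., |Im(A_z u, u)| ≤ tan(|arg(−z)|) · Re(A_z u, u) for all u ∈ dom A_z. -/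
open scoped ComplexConjugate Pointwise Topology

/-- If `S` is a closed densely defined nonnegative symmetric operator and `z ∈ ℂ₊` with
`Re z < 0`, then the compression `A_z` of the Shtraus extension `S̃_z` onto
`M_z̄ = ran (S - z̄ I)` is sectorial with vertex at the origin and semi-angle `|arg (-z)|`:
`|Im ⟪A_z u, u⟫| ≤ tan |arg (-z)| · Re ⟪A_z u, u⟫` for all `u ∈ dom A_z`. -/
theorem compression_of_shtraus_sectorial
    {H : Type*} [NormedAddCommGroup H] [InnerProductSpace ℂ H] [CompleteSpace H]
    (S : H →ₗ.[ℂ] H) (hdense : Dense (S.domain : Set H))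
    (hclosed : IsClosed (S.graph : Set (H × H)))
    (hsym : ∀ f g : S.domain, (inner ℂ (S f) ((g : H)) : ℂ) = inner ℂ ((f : H)) (S g))
    (hnonneg : ∀ f : S.domain, 0 ≤ (inner ℂ (S f) ((f : H)) : ℂ).re)
    (z : ℂ) (hz : 0 < z.im) (hrez : z.re < 0)
    (K : Submodule ℂ H) [CompleteSpace K]
    (hK : K = LinearMap.range (S.toFun - (conj z) • S.domain.subtype))
    (A : K →ₗ.[ℂ] K)
    (hA : ∀ u v : K, (u, v) ∈ A.graph ↔
      ∃ f : S.domain, u = Submodule.orthogonalProjection K (f : H) ∧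
        (v : H) = (S f - (conj z) • (f : H)) +
          (conj z) • ((Submodule.orthogonalProjection K (f : H) : K) : H)) :
    ∀ u : A.domain,
      |(inner ℂ (A u) ((u : K)) : ℂ).im| ≤
        Real.tan |Complex.arg (-z)| * (inner ℂ (A u) ((u : K)) : ℂ).re := by
  intro u
  obtain ⟨f, hu, hv⟩ := (hA u (A u)).mp (A.mem_graph u)
  set p : H := ((Submodule.orthogonalProjection K (f : H) : K) : H) with hp_def
  set w : H := (f : H) - p with hw_def
  have hw : w ∈ Kᗮ := Submodule.sub_starProjection_mem_orthogonal (K := K) (f : H)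
  have hpK : p ∈ K := (Submodule.orthogonalProjection K (f : H)).2
  have haK : (S f - conj z • (f : H)) ∈ K := by
    rw [hK]
    exact ⟨f, rfl⟩
  -- the key identity
  have hpw : (inner ℂ p w : ℂ) = 0 := Submodule.inner_right_of_mem_orthogonal hpK hw
  have hwp : (inner ℂ w p : ℂ) = 0 := Submodule.inner_left_of_mem_orthogonal hpK hw
  have haw : (inner ℂ (S f - conj z • (f : H)) w : ℂ) = 0 :=
    Submodule.inner_right_of_mem_orthogonal haK hw
  set s : ℂ := inner ℂ (S f) ((f : H)) with hs_def
  set t : ℝ := ‖w‖ ^ 2 with ht_def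
  have hkey : (inner ℂ (A u) ((u : K)) : ℂ) = s - z * t := by
    rw [Submodule.coe_inner, hv, hu]
    have hf : (f : H) = p + w := by simp [hw_def]
    calc (inner ℂ ((S f - conj z • (f : H)) + conj z • p) p : ℂ)
        = inner ℂ (S f - conj z • (f : H)) p + z * inner ℂ p p := by
          rw [inner_add_left, inner_smul_left]
          simp only [Complex.conj_conj, RCLike.conj_conj]
      _ = (inner ℂ (S f - conj z • (f : H)) ((f : H)) - inner ℂ (S f - conj z • (f : H)) w)
            + z * inner ℂ p p := by
          congr 1
          have h3 : (inner ℂ (S f - conj z • (f : H)) ((f : H)) : ℂ)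
              = inner ℂ (S f - conj z • (f : H)) p + inner ℂ (S f - conj z • (f : H)) w := by
            rw [← inner_add_right]
            congr 1
          rw [h3]
          ring
      _ = (s - z * inner ℂ (f : H) (f : H)) + z * inner ℂ p p := by
          rw [haw, inner_sub_left, inner_smul_left]
          simp [hs_def]
      _ = s - z * (inner ℂ (f : H) (f : H) - inner ℂ p p) := by ring
      _ = s - z * t := by
          rw [hf, inner_add_add_self, hpw, hwp]
          simp only [inner_self_eq_norm_sq_to_K]
          rw [ht_def]
          push_cast
          ring_nf
          norm_cast
  have hsim : s.im = 0 := by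
    have h1 : s = inner ℂ ((f : H)) ((S f : H)) := hs_def.trans (hsym f f)
    have h2 : conj s = s := by
      conv_lhs => rw [h1]
      rw [inner_conj_symm, ← hs_def]
    exact Complex.conj_eq_iff_im.mp h2
  have hsre : 0 ≤ s.re := hnonneg f
  have ht : 0 ≤ t := sq_nonneg _
  -- compute the tangent
  have harg : Complex.arg (-z) < 0 := Complex.arg_neg_iff.mpr (by simpa using hz)
  have htan : Real.tan |Complex.arg (-z)| = z.im / (-z.re) := by
    rw [abs_of_neg harg, Real.tan_neg, Complex.tan_arg]
    rw [Complex.neg_im, Complex.neg_re, neg_div_neg_eq, div_neg]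
  rw [hkey, htan]
  have him : (s - z * (t : ℂ)).im = -(z.im * t) := by
    simp [Complex.sub_im, Complex.mul_im, hsim]
  have hre : (s - z * (t : ℂ)).re = s.re - z.re * t := by
    simp [Complex.sub_re, Complex.mul_re]
  rw [him, hre, abs_neg, abs_of_nonneg (mul_nonneg hz.le ht)]
  have hr : (0:ℝ) < -z.re := by linarith
  rw [div_mul_eq_mul_div, le_div_iff₀ hr]
  nlinarith [mul_nonneg hz.le hsre]
end

section
/- Let S be a closed symmetric operator. If S is non-densely defined, then for every z ∈ ℂ₊ the Shtraus extension S̃_z does NOT belong to the class D_sing; if S is densely defined then every maximal dissipative extension of S, in particular S̃_z, belongs to D_sing. -/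
open scoped ComplexConjugate Pointwise Topology

/-- The deficiency subspace `N_z = (ran (S - z̄ I))ᗮ` of a closed symmetric operator `S`. -/
noncomputable def deficiencySubspace {H : Type*} [NormedAddCommGroup H]
    [InnerProductSpace ℂ H] (S : H →ₗ.[ℂ] H) (lam : ℂ) : Submodule ℂ H :=
  (LinearMap.range (S.toFun - (conj lam) • S.domain.subtype))ᗮ



private lemma im_inner_self' {H : Type*} [NormedAddCommGroup H] [InnerProductSpace ℂ H]
    (S : H →ₗ.[ℂ] H)
    (hsym : ∀ f g : S.domain, (inner ℂ (S f) ((g : H)) : ℂ) = inner ℂ ((f : H)) (S g))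
    (f : S.domain) : (inner ℂ (S f) ((f : H)) : ℂ).im = 0 := by
  have h : (starRingEnd ℂ) (inner ℂ (S f) ((f : H)) : ℂ) = inner ℂ (S f) ((f : H)) := by
    rw [inner_conj_symm]; exact (hsym f f).symm
  exact Complex.conj_eq_iff_im.mp h

private lemma gamma_formula' {H : Type*} [NormedAddCommGroup H] [InnerProductSpace ℂ H]
    (S : H →ₗ.[ℂ] H)
    (hsym : ∀ f g : S.domain, (inner ℂ (S f) ((g : H)) : ℂ) = inner ℂ ((f : H)) (S g))
    (z : ℂ) (f : S.domain) (φ : H) (hφ : φ ∈ deficiencySubspace S z) :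
    (inner ℂ (S f + z • φ) ((f : H) + φ) : ℂ).im = -z.im * ‖φ‖ ^ 2 := by
  have hφ' : ∀ v : S.domain, (inner ℂ (S v - conj z • (v : H)) φ : ℂ) = 0 := by
    intro v
    refine (Submodule.mem_orthogonal _ _).1 hφ _ ⟨v, ?_⟩
    simp [LinearMap.sub_apply, LinearMap.smul_apply]
  have h1 : (inner ℂ (S f) φ : ℂ) = z * inner ℂ ((f : H)) φ := by
    have := hφ' f
    rw [inner_sub_left, inner_smul_left, sub_eq_zero] at this
    simpa using this
  have hre2 : (inner ℂ φ φ : ℂ).re = ‖φ‖ ^ 2 := by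
    rw [inner_self_eq_norm_sq_to_K]; norm_num [pow_two, Complex.mul_re]
  have him2 : (inner ℂ φ φ : ℂ).im = 0 := by
    rw [inner_self_eq_norm_sq_to_K]; norm_num [pow_two, Complex.mul_im]
  rw [inner_add_left, inner_add_right, inner_add_right, inner_smul_left, inner_smul_left,
    h1, ← inner_conj_symm ((f : H)) φ]
  have him := im_inner_self' S hsym f
  simp only [Complex.add_im, Complex.mul_im, him, him2, hre2, Complex.conj_re, Complex.conj_im]
  ring

private lemma defect_estimate' {H : Type*} [NormedAddCommGroup H] [InnerProductSpace ℂ H]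
    (S : H →ₗ.[ℂ] H)
    (hsym : ∀ f g : S.domain, (inner ℂ (S f) ((g : H)) : ℂ) = inner ℂ ((f : H)) (S g))
    (z : ℂ) (hz : 0 ≤ z.im) (f : S.domain) :
    z.im * ‖(f : H)‖ ≤ ‖S f - conj z • ((f : H))‖ := by
  rcases eq_or_ne ‖(f : H)‖ 0 with h0 | h0
  · rw [h0, mul_zero]; positivity
  have hnpos : 0 < ‖(f : H)‖ := lt_of_le_of_ne (norm_nonneg _) (Ne.symm h0)
  have hc : (inner ℂ (S f - conj z • ((f : H))) ((f : H)) : ℂ).im = -(z.im * ‖(f : H)‖ ^ 2) := by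
    have hre2 : (inner ℂ ((f : H)) ((f : H)) : ℂ).re = ‖(f : H)‖ ^ 2 := by
      rw [inner_self_eq_norm_sq_to_K]; norm_num [pow_two, Complex.mul_re]
    have him2 : (inner ℂ ((f : H)) ((f : H)) : ℂ).im = 0 := by
      rw [inner_self_eq_norm_sq_to_K]; norm_num [pow_two, Complex.mul_im]
    rw [inner_sub_left, inner_smul_left]
    simp only [Complex.sub_im, im_inner_self' S hsym f, Complex.mul_im, Complex.conj_re,
      Complex.conj_im, him2, hre2]
    ring
  have key : z.im * ‖(f : H)‖ * ‖(f : H)‖ ≤ ‖S f - conj z • ((f : H))‖ * ‖(f : H)‖ := by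
    calc z.im * ‖(f : H)‖ * ‖(f : H)‖
        = |(inner ℂ (S f - conj z • ((f : H))) ((f : H)) : ℂ).im| := by
          rw [hc, abs_neg, abs_of_nonneg (by positivity)]; ring
      _ ≤ ‖(inner ℂ (S f - conj z • ((f : H))) ((f : H)) : ℂ)‖ := Complex.abs_im_le_norm _
      _ ≤ ‖S f - conj z • ((f : H))‖ * ‖(f : H)‖ := norm_inner_le_norm _ _
  exact le_of_mul_le_mul_right key hnpos

/-- Let `S` be a closed symmetric operator. If `S` is non-densely defined, then for every
`z ∈ ℂ₊` the Shtraus extension `S̃_z` is not in `D_sing`; if `S` is densely defined, then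
every maximal dissipative extension of `S` (in particular `S̃_z`) is in `D_sing`. -/
theorem shtraus_singular_iff_dense_domain
    {H : Type*} [NormedAddCommGroup H] [InnerProductSpace ℂ H] [CompleteSpace H]
    (S : H →ₗ.[ℂ] H) (hclosed : IsClosed (S.graph : Set (H × H)))
    (hsym : ∀ f g : S.domain, (inner ℂ (S f) ((g : H)) : ℂ) = inner ℂ ((f : H)) (S g)) :
    (¬ Dense (S.domain : Set H) → ∀ z : ℂ, 0 < z.im → ∀ T : H →ₗ.[ℂ] H,
      (∀ x y : H, (x, y) ∈ T.graph ↔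
        ∃ (f : S.domain) (φ : deficiencySubspace S z),
          x = (f : H) + (φ : H) ∧ y = S f + z • (φ : H)) →
      ¬ IsSingularImForm T) ∧
    (Dense (S.domain : Set H) → ∀ T : H →ₗ.[ℂ] H,
      S ≤ T → IsMaxDissipative T → IsSingularImForm T) := by
  constructor
  · -- non-densely defined case
    intro hnd z hz T hT hsing
    set K := S.domain.topologicalClosure with hK
    haveI : CompleteSpace K := (S.domain.isClosed_topologicalClosure).completeSpace_coe
    have hKne : Kᗮ ≠ ⊥ := by
      intro h
      exact hnd (Submodule.dense_iff_topologicalClosure_eq_top.2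
        (Submodule.orthogonal_eq_bot_iff.1 h))
    obtain ⟨ψ, hψK', hψ0⟩ := Submodule.exists_mem_ne_zero_of_ne_bot hKne
    have hψK : ∀ v ∈ K, (inner ℂ v ψ : ℂ) = 0 := (Submodule.mem_orthogonal K ψ).1 hψK'
    have hφ0 : ∃ φ₀ : H, φ₀ ∈ deficiencySubspace S z ∧ (inner ℂ φ₀ ψ : ℂ) ≠ 0 := by
      by_contra hcon
      push_neg at hcon
      have hψN : ψ ∈ (deficiencySubspace S z)ᗮ := (Submodule.mem_orthogonal _ _).2 hcon
      rw [deficiencySubspace, Submodule.orthogonal_orthogonal_eq_closure] at hψN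
      have hψc : ψ ∈ closure ((LinearMap.range
          (S.toFun - (conj z) • S.domain.subtype) : Submodule ℂ H) : Set H) := by
        rw [← Submodule.topologicalClosure_coe]; exact hψN
      obtain ⟨y, hymem, hylim⟩ := mem_closure_iff_seq_limit.1 hψc
      choose f hf using fun n => LinearMap.mem_range.1 (hymem n)
      have hfy : ∀ n, S (f n) - conj z • ((f n : H)) = y n := by
        intro n
        have := hf n
        simpa [LinearMap.sub_apply, LinearMap.smul_apply] using this
      have hcau : CauchySeq (fun n => ((f n : H))) := by
        rw [Metric.cauchySeq_iff]
        intro ε hε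
        obtain ⟨N, hN⟩ := Metric.cauchySeq_iff.1 hylim.cauchySeq (z.im * ε)
          (by positivity)
        refine ⟨N, fun m hm n hn => ?_⟩
        have h1 := defect_estimate' S hsym z hz.le (f m - f n)
        have h2 : S (f m - f n) - conj z • (((f m - f n : S.domain) : H))
            = y m - y n := by
          rw [S.map_sub, ← hfy m, ← hfy n]
          simp only [Submodule.coe_sub, smul_sub]
          abel
        rw [h2] at h1
        have h3 : ((f m - f n : S.domain) : H) = ((f m : H)) - ((f n : H)) := rfl
        rw [h3] at h1
        have h4 : dist (y m) (y n) < z.im * ε := hN m hm n hn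
        rw [dist_eq_norm] at h4 ⊢
        have h5 := lt_of_le_of_lt h1 h4
        exact lt_of_mul_lt_mul_left h5 hz.le
      obtain ⟨x, hx⟩ := cauchySeq_tendsto_of_complete hcau
      have hSlim : Filter.Tendsto (fun n => S (f n)) Filter.atTop
          (𝓝 (ψ + conj z • x)) := by
        have heq : (fun n => S (f n)) = fun n => y n + conj z • ((f n : H)) := by
          funext n
          rw [← hfy n]; abel
        rw [heq]
        exact hylim.add (hx.const_smul _)
      have hgraph : (x, ψ + conj z • x) ∈ S.graph := by
        refine hclosed.mem_of_tendsto (hx.prodMk_nhds hSlim)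
          (Filter.Eventually.of_forall fun n => S.mem_graph (f n))
      obtain ⟨x', hx'1', hx'2'⟩ := (LinearPMap.mem_graph_iff S).1 hgraph
      have hx'1 : (x' : H) = x := hx'1'
      have hx'2 : S x' = ψ + conj z • x := hx'2'
      have hxψ : (inner ℂ x ψ : ℂ) = 0 :=
        hψK x (Submodule.le_topologicalClosure _ (hx'1 ▸ x'.2))
      have hψ_eq : ψ = S x' - conj z • x := by
        rw [hx'2]; abel
      have hre2 : (inner ℂ x x : ℂ).re = ‖x‖ ^ 2 := by
        rw [inner_self_eq_norm_sq_to_K]; norm_num [pow_two, Complex.mul_re]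
      have him2 : (inner ℂ x x : ℂ).im = 0 := by
        rw [inner_self_eq_norm_sq_to_K]; norm_num [pow_two, Complex.mul_im]
      have himSx : (inner ℂ x (S x') : ℂ).im = 0 := by
        have h := im_inner_self' S hsym x'
        rw [hx'1] at h
        have h2 : (inner ℂ x (S x') : ℂ) = conj (inner ℂ (S x') x : ℂ) :=
          (inner_conj_symm _ _).symm
        rw [h2, Complex.conj_im, h, neg_zero]
      have hx0 : ‖x‖ ^ 2 = 0 := by
        have h5 : (inner ℂ x ψ : ℂ).im = z.im * ‖x‖ ^ 2 := by
          rw [hψ_eq, inner_sub_right, inner_smul_right]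
          simp only [Complex.sub_im, himSx, Complex.mul_im, Complex.conj_re,
            Complex.conj_im, hre2, him2]
          ring
        rw [hxψ] at h5
        simp only [Complex.zero_im] at h5
        exact ((mul_eq_zero.1 h5.symm).resolve_left (ne_of_gt hz))
      have hxzero : x = 0 := norm_eq_zero.1 (sq_eq_zero_iff.1 hx0)
      apply hψ0
      rw [hψ_eq, hxzero, smul_zero, sub_zero]
      have hx'0 : x' = 0 := by
        ext1
        rw [hx'1, hxzero]
        rfl
      rw [hx'0]
      exact S.map_zero
    obtain ⟨φ₀, hφ₀N, hφ₀ψ⟩ := hφ0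
    have hmem : (φ₀, z • φ₀) ∈ T.graph := by
      refine (hT φ₀ (z • φ₀)).2 ⟨0, ⟨φ₀, hφ₀N⟩, by simp, by simp [S.map_zero]⟩
    obtain ⟨t₀, ht₀1', _⟩ := (LinearPMap.mem_graph_iff T).1 hmem
    have ht₀1 : (t₀ : H) = φ₀ := ht₀1'
    obtain ⟨g, hg1, hg2⟩ := hsing t₀
    have hdec : ∀ n, ∃ (fn : S.domain) (φn : deficiencySubspace S z),
        ((g n : H)) = (fn : H) + (φn : H) ∧ T (g n) = S fn + z • (φn : H) :=
      fun n => (hT _ _).1 (T.mem_graph (g n))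
    choose fn φn hfn hTn using hdec
    have hγ : ∀ n, (inner ℂ (T (g n)) ((g n : H)) : ℂ).im
        = -z.im * ‖((φn n : H))‖ ^ 2 := by
      intro n
      rw [hTn n, hfn n]
      exact gamma_formula' S hsym z (fn n) _ (φn n).2
    have hφlim : Filter.Tendsto (fun n => ‖((φn n : H))‖ ^ 2) Filter.atTop (𝓝 0) := by
      have heq : (fun n => ‖((φn n : H))‖ ^ 2)
          = fun n => (-z.im)⁻¹ * (inner ℂ (T (g n)) ((g n : H)) : ℂ).im := by
        funext n
        rw [hγ n, ← mul_assoc, inv_mul_cancel₀ (by simp [ne_of_gt hz]), one_mul]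
      rw [heq]
      simpa using hg2.const_mul (-z.im)⁻¹
    have hφn0 : Filter.Tendsto (fun n => ((φn n : H))) Filter.atTop (𝓝 0) := by
      rw [tendsto_zero_iff_norm_tendsto_zero]
      have h := hφlim.sqrt
      simp only [Real.sqrt_zero] at h
      refine h.congr fun n => ?_
      exact Real.sqrt_sq (norm_nonneg _)
    have hfl : Filter.Tendsto (fun n => ((fn n : H))) Filter.atTop (𝓝 φ₀) := by
      have heq : (fun n => ((fn n : H))) = fun n => ((g n : H)) - ((φn n : H)) := by
        funext n
        rw [hfn n]; abel
      rw [heq]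
      have h := hg1.sub hφn0
      rw [ht₀1, sub_zero] at h
      exact h
    have hcont : Filter.Tendsto (fun n => (inner ℂ ((fn n : H)) ψ : ℂ)) Filter.atTop
        (𝓝 (inner ℂ φ₀ ψ)) := hfl.inner tendsto_const_nhds
    have hzero : ∀ n, (inner ℂ ((fn n : H)) ψ : ℂ) = 0 :=
      fun n => hψK _ (Submodule.le_topologicalClosure _ (fn n).2)
    have h0 : Filter.Tendsto (fun _ : ℕ => (0 : ℂ)) Filter.atTop (𝓝 (inner ℂ φ₀ ψ)) :=
      hcont.congr hzero
    exact hφ₀ψ (tendsto_nhds_unique h0 tendsto_const_nhds)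
  · -- densely defined case
    intro hd T hST _ f
    obtain ⟨g, hg_mem, hg_lim⟩ := mem_closure_iff_seq_limit.1 (hd ((f : H)))
    refine ⟨fun n => ⟨g n, hST.1 (hg_mem n)⟩, by simpa using hg_lim, ?_⟩
    have hzero : ∀ n, (inner ℂ (T ⟨g n, hST.1 (hg_mem n)⟩) (g n) : ℂ).im = 0 := by
      intro n
      rw [← hST.2 (x := ⟨g n, hg_mem n⟩) (y := ⟨g n, hST.1 (hg_mem n)⟩) rfl]
      exact im_inner_self' S hsym ⟨g n, hg_mem n⟩
    have : (fun n => (inner ℂ (T ⟨g n, hST.1 (hg_mem n)⟩) (g n) : ℂ).im)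
        = fun _ => (0 : ℝ) := funext hzero
    rw [this]
    exact tendsto_const_nhds
end

section
/- Let B be a bounded nonnegative selfadjoint operator on H and K ⊆ H a closed subspace. The shorted operator B_K (the maximum of all bounded Z with 0 ≤ Z ≤ B and ran Z ⊆ K) satisfies ran(B_K)^{1/2} = ran(B^{1/2}) ∩ K. -/
open scoped ComplexConjugate Pointwise Topology

open ContinuousLinearMap InnerProductSpace RCLike

set_option maxHeartbeats 2000000

section Aux

variable {H : Type*} [NormedAddCommGroup H] [InnerProductSpace ℂ H] [CompleteSpace H]

local notation "⟪" x ", " y "⟫" => @inner ℂ _ _ x y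

/-- Forward half of the Shmul'yan criterion: elements of the range of a selfadjoint
operator satisfy the inner product bound. -/
lemma aux_bound_of_mem (S : H →L[ℂ] H) (hS : IsSelfAdjoint S) (g f : H) :
    ‖⟪S g, f⟫‖ ≤ ‖g‖ * ‖S f‖ := by
  have h1 : ⟪S g, f⟫ = ⟪g, S f⟫ := by
    nth_rewrite 1 [← hS.adjoint_eq]
    exact adjoint_inner_left S f g
  rw [h1]
  exact norm_inner_le_norm g (S f)

/-- Shmul'yan-type criterion: if `‖⟪h, f⟫‖ ≤ c * ‖S f‖` for all `f`, with `S` selfadjoint,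
then `h` lies in the range of `S`. Proved via Hahn–Banach and Riesz representation. -/
lemma aux_mem_range_of_bound (S : H →L[ℂ] H) (hS : IsSelfAdjoint S) (h : H) (c : ℝ)
    (hb : ∀ f : H, ‖⟪h, f⟫‖ ≤ c * ‖S f‖) : h ∈ Set.range S := by
  classical
  set Sₗ : H →ₗ[ℂ] H := (S : H →ₗ[ℂ] H) with hSₗ
  set p : Submodule ℂ H := LinearMap.range Sₗ with hp
  have hker : LinearMap.ker Sₗ ≤ LinearMap.ker ((innerSL ℂ h).toLinearMap) := by
    intro f hf
    have hf' : S f = 0 := hf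
    have hbf := hb f
    rw [hf', norm_zero, mul_zero] at hbf
    have : ⟪h, f⟫ = 0 := norm_le_zero_iff.mp hbf
    simpa [LinearMap.mem_ker] using this
  set e := Sₗ.quotKerEquivRange with he
  set φ₀ : p →ₗ[ℂ] ℂ :=
    ((LinearMap.ker Sₗ).liftQ ((innerSL ℂ h).toLinearMap) hker).comp e.symm.toLinearMap with hφ₀def
  have hφ₀ : ∀ f : H, φ₀ ⟨S f, ⟨f, rfl⟩⟩ = ⟪h, f⟫ := by
    intro f
    have h1 : e (Submodule.Quotient.mk f) = ⟨S f, ⟨f, rfl⟩⟩ := by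
      apply Subtype.ext
      exact Sₗ.quotKerEquivRange_apply_mk f
    have h2 : e.symm ⟨S f, ⟨f, rfl⟩⟩ = Submodule.Quotient.mk f := by
      rw [← h1, LinearEquiv.symm_apply_apply]
    simp only [hφ₀def, LinearMap.comp_apply, LinearEquiv.coe_toLinearMap, h2,
      Submodule.liftQ_apply]
    rfl
  have hφbound : ∀ x : p, ‖φ₀ x‖ ≤ c * ‖x‖ := by
    rintro ⟨y, f, rfl⟩
    have : (⟨Sₗ f, ⟨f, rfl⟩⟩ : p) = ⟨S f, ⟨f, rfl⟩⟩ := rfl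
    rw [this, hφ₀ f]
    exact hb f
  set φ : p →L[ℂ] ℂ := LinearMap.mkContinuous φ₀ c hφbound with hφdef
  obtain ⟨g, hg, -⟩ := exists_extension_norm_eq p φ
  set w := (InnerProductSpace.toDual ℂ H).symm g with hw
  refine ⟨w, ?_⟩
  apply ext_inner_right ℂ
  intro v
  have h1 : ⟪w, S v⟫ = g (S v) := toDual_symm_apply
  have h2 : g (S v) = φ₀ ⟨S v, ⟨v, rfl⟩⟩ := hg ⟨S v, ⟨v, rfl⟩⟩
  have h3 : ⟪S w, v⟫ = ⟪w, S v⟫ := by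
    nth_rewrite 1 [← hS.adjoint_eq]
    exact adjoint_inner_left S v w
  rw [h3, h1, h2, hφ₀ v]

end Aux

/-- Kreĭn's shorted operator: if `B ≥ 0` is bounded, `K` is a closed subspace, and `B_K` is
the maximum of all bounded `Z` with `0 ≤ Z ≤ B` and `ran Z ⊆ K`, then
`ran (B_K)^{1/2} = ran B^{1/2} ∩ K`. -/
theorem shorted_operator_sqrt_range
    {H : Type*} [NormedAddCommGroup H] [InnerProductSpace ℂ H] [CompleteSpace H]
    (B : H →L[ℂ] H) (hB : B.IsPositive)
    (K : Submodule ℂ H) (hKc : IsClosed (K : Set H))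
    (BK : H →L[ℂ] H)
    (hBK₁ : BK.IsPositive) (hBK₂ : (B - BK).IsPositive)
    (hBK₃ : Set.range BK ⊆ (K : Set H))
    (hmax : ∀ Z : H →L[ℂ] H, Z.IsPositive → (B - Z).IsPositive →
      Set.range Z ⊆ (K : Set H) → (BK - Z).IsPositive) :
    Set.range (CFC.sqrt BK : H →L[ℂ] H) =
      Set.range (CFC.sqrt B : H →L[ℂ] H) ∩ (K : Set H) := by
  classical
  have hBnn : (0 : H →L[ℂ] H) ≤ B := (nonneg_iff_isPositive B).2 hB
  have hKnn : (0 : H →L[ℂ] H) ≤ BK := (nonneg_iff_isPositive BK).2 hBK₁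
  set SB : H →L[ℂ] H := CFC.sqrt B with hSBdef
  set SK : H →L[ℂ] H := CFC.sqrt BK with hSKdef
  have hSB2 : SB * SB = B := CFC.sqrt_mul_sqrt_self B hBnn
  have hSK2 : SK * SK = BK := CFC.sqrt_mul_sqrt_self BK hKnn
  have hSBpos : SB.IsPositive := (nonneg_iff_isPositive SB).1 (CFC.sqrt_nonneg B)
  have hSKpos : SK.IsPositive := (nonneg_iff_isPositive SK).1 (CFC.sqrt_nonneg BK)
  have hSBsa : IsSelfAdjoint SB := hSBpos.isSelfAdjoint
  have hSKsa : IsSelfAdjoint SK := hSKpos.isSelfAdjoint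
  -- the basic norm identity for squares of selfadjoint operators
  have normsq : ∀ (T : H →L[ℂ] H), IsSelfAdjoint T → ∀ f : H,
      (inner ℂ ((T * T) f) f : ℂ) = ((‖T f‖ : ℂ) ^ 2) := by
    intro T hT f
    rw [ContinuousLinearMap.mul_apply]
    have h1 : (inner ℂ (T (T f)) f : ℂ) = inner ℂ (T f) (T f) := by
      nth_rewrite 1 [← hT.adjoint_eq]
      exact adjoint_inner_left T f (T f)
    rw [h1, inner_self_eq_norm_sq_to_K]
    norm_cast
  have normsqB : ∀ f : H, (inner ℂ (B f) f : ℂ) = ((‖SB f‖ : ℂ) ^ 2) := by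
    intro f; rw [← hSB2]; exact normsq SB hSBsa f
  have normsqK : ∀ f : H, (inner ℂ (BK f) f : ℂ) = ((‖SK f‖ : ℂ) ^ 2) := by
    intro f; rw [← hSK2]; exact normsq SK hSKsa f
  -- the comparison ‖SK f‖ ≤ ‖SB f‖
  have hle : ∀ f : H, ‖SK f‖ ≤ ‖SB f‖ := by
    intro f
    have h0 : 0 ≤ re (inner ℂ ((B - BK) f) f : ℂ) := hBK₂.2 f
    rw [ContinuousLinearMap.sub_apply, inner_sub_left, map_sub, normsqB f, normsqK f] at h0
    simp only [RCLike.re_to_complex, ← Complex.ofReal_pow, Complex.ofReal_re] at h0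
    have hsq : ‖SK f‖ ^ 2 ≤ ‖SB f‖ ^ 2 := by linarith
    exact (pow_le_pow_iff_left₀ (norm_nonneg _) (norm_nonneg _) two_ne_zero).1 hsq
  have hKcomp : CompleteSpace K := hKc.completeSpace_coe
  apply Set.eq_of_subset_of_subset
  · -- range SK ⊆ range SB ∩ K
    rintro x ⟨g, rfl⟩
    constructor
    · -- SK g ∈ range SB
      apply aux_mem_range_of_bound SB hSBsa (SK g) ‖g‖
      intro f
      calc ‖(inner ℂ (SK g) f : ℂ)‖ ≤ ‖g‖ * ‖SK f‖ := aux_bound_of_mem SK hSKsa g f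
        _ ≤ ‖g‖ * ‖SB f‖ := by
            exact mul_le_mul_of_nonneg_left (hle f) (norm_nonneg g)
    · -- SK g ∈ K
      have hKK : Kᗮᗮ = K := Submodule.orthogonal_orthogonal K
      have : SK g ∈ Kᗮᗮ := by
        rw [Submodule.mem_orthogonal]
        intro u hu
        have hSKu : SK u = 0 := by
          have hBKu : (inner ℂ (BK u) u : ℂ) = 0 := by
            have : BK u ∈ K := hBK₃ ⟨u, rfl⟩
            exact (Submodule.mem_orthogonal K u).1 hu (BK u) this
          have := normsqK u
          rw [hBKu] at this
          have h2 : (‖SK u‖ : ℂ) ^ 2 = 0 := this.symm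
          have h3 : ‖SK u‖ = 0 := by
            have := sq_eq_zero_iff.1 h2
            exact_mod_cast this
          exact norm_eq_zero.1 h3
        have h1 : (inner ℂ u (SK g) : ℂ) = inner ℂ (SK u) g := by
          nth_rewrite 1 [← hSKsa.adjoint_eq]
          exact adjoint_inner_right SK u g
        rw [h1, hSKu, inner_zero_left]
      rw [← hKK]
      exact this
  · -- range SB ∩ K ⊆ range SK
    rintro x ⟨⟨g, rfl⟩, hxK⟩
    by_cases hg : g = 0
    · exact ⟨0, by simp [hg]⟩
    have hgpos : (0 : ℝ) < ‖g‖ := norm_pos_iff.2 hg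
    -- the rank one operator Z = (‖g‖²)⁻¹ |SB g⟩⟨SB g|
    set x : H := SB g with hxdef
    set Z : H →L[ℂ] H := ((‖g‖ : ℂ) ^ 2)⁻¹ • ((innerSL ℂ x).smulRight x) with hZdef
    have hZapp : ∀ f : H, Z f = ((‖g‖ : ℂ) ^ 2)⁻¹ • ((inner ℂ x f : ℂ) • x) := by
      intro f; rfl
    have hZinner : ∀ f : H, (inner ℂ (Z f) f : ℂ) = ((‖(inner ℂ x f : ℂ)‖ ^ 2 / ‖g‖ ^ 2 : ℝ) : ℂ) := by
      intro f
      have hc : (starRingEnd ℂ) (((‖g‖ : ℂ) ^ 2)⁻¹) = ((‖g‖ : ℂ) ^ 2)⁻¹ := by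
        rw [map_inv₀, map_pow, Complex.conj_ofReal]
      have hz : (starRingEnd ℂ) (inner ℂ x f : ℂ) * (inner ℂ x f : ℂ)
          = ((‖(inner ℂ x f : ℂ)‖ ^ 2 : ℝ) : ℂ) := by
        rw [mul_comm, Complex.mul_conj]
        norm_cast
        rw [Complex.normSq_eq_norm_sq]
      rw [hZapp f, inner_smul_left, inner_smul_left, hc, hz]
      push_cast
      ring
    have hbd : ∀ f : H, ‖(inner ℂ x f : ℂ)‖ ≤ ‖g‖ * ‖SB f‖ := fun f =>
      aux_bound_of_mem SB hSBsa g f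
    have hZpos : Z.IsPositive := by
      rw [isPositive_iff_complex]
      intro f
      rw [hZinner f]
      constructor
      · rw [RCLike.re_to_complex, Complex.ofReal_re]
      · rw [RCLike.re_to_complex, Complex.ofReal_re]
        positivity
    have hBZ : (B - Z).IsPositive := by
      rw [isPositive_iff_complex]
      intro f
      have hval : (inner ℂ ((B - Z) f) f : ℂ)
          = ((‖SB f‖ ^ 2 - ‖(inner ℂ x f : ℂ)‖ ^ 2 / ‖g‖ ^ 2 : ℝ) : ℂ) := by
        rw [ContinuousLinearMap.sub_apply, inner_sub_left, normsqB f, hZinner f]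
        push_cast
        ring
      rw [hval]
      have hineq : ‖(inner ℂ x f : ℂ)‖ ^ 2 / ‖g‖ ^ 2 ≤ ‖SB f‖ ^ 2 := by
        rw [div_le_iff₀ (by positivity)]
        calc ‖(inner ℂ x f : ℂ)‖ ^ 2 ≤ (‖g‖ * ‖SB f‖) ^ 2 := by
              apply pow_le_pow_left₀ (norm_nonneg _) (hbd f)
          _ = ‖SB f‖ ^ 2 * ‖g‖ ^ 2 := by ring
      constructor
      · rw [RCLike.re_to_complex, Complex.ofReal_re]
      · rw [RCLike.re_to_complex, Complex.ofReal_re]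
        linarith
    have hranZ : Set.range Z ⊆ (K : Set H) := by
      rintro _ ⟨f, rfl⟩
      rw [hZapp f]
      exact K.smul_mem _ (K.smul_mem _ hxK)
    have hZK : (BK - Z).IsPositive := hmax Z hZpos hBZ hranZ
    apply aux_mem_range_of_bound SK hSKsa x ‖g‖
    intro f
    have h0 : 0 ≤ re (inner ℂ ((BK - Z) f) f : ℂ) := hZK.2 f
    have hval : (inner ℂ ((BK - Z) f) f : ℂ)
        = ((‖SK f‖ ^ 2 - ‖(inner ℂ x f : ℂ)‖ ^ 2 / ‖g‖ ^ 2 : ℝ) : ℂ) := by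
      rw [ContinuousLinearMap.sub_apply, inner_sub_left, normsqK f, hZinner f]
      push_cast
      ring
    rw [hval] at h0
    rw [RCLike.re_to_complex, Complex.ofReal_re] at h0
    have hsq : ‖(inner ℂ x f : ℂ)‖ ^ 2 ≤ (‖g‖ * ‖SK f‖) ^ 2 := by
      have h1 : ‖(inner ℂ x f : ℂ)‖ ^ 2 / ‖g‖ ^ 2 ≤ ‖SK f‖ ^ 2 := by linarith
      have h2 := (div_le_iff₀ (by positivity : (0:ℝ) < ‖g‖ ^ 2)).1 h1
      calc ‖(inner ℂ x f : ℂ)‖ ^ 2 ≤ ‖SK f‖ ^ 2 * ‖g‖ ^ 2 := h2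
        _ = (‖g‖ * ‖SK f‖) ^ 2 := by ring
    exact (pow_le_pow_iff_left₀ (norm_nonneg _) (by positivity) two_ne_zero).1 hsq
end
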